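/- Clock deallocation soundness: in a well-formed state, if activity l executes drop c and l is the only activity registered with c (R = {l}), then after the step no activity's local view mentions c, so removing c from the heap preserves well-formedness. -/
import Mathlib


/-! A model of X10 restricted to clocks: syntax, operational semantics,
run-time errors, and type system. -/

/-- A clock value: (global phase, registered activities R, quiesced activities Q). -/
abbrev ClockVal := ℕ × Finset ℕ × Finset ℕ

/-- Heaps map clock names to clock values. -/
abbrev Heap := ℕ → Option ClockVal

/-- Local views map clock names to local phases. -/
abbrev View := ℕ → Option ℕ

/-- Update a finite map at one key. -/
def updf {β : Type _} (f : ℕ → Option β) (k : ℕ) (v : β) : ℕ → Option β :=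
  fun k' => if k' = k then some v else f k'

/-- Values: unit, variables, clock names. -/
inductive Val where
  | unit
  | vr (x : ℕ)
  | clk (c : ℕ)
deriving DecidableEq

/-- Expressions of X10 restricted to clocks (with the run-time `join`). -/
inductive Expr where
  | val (v : Val)
  | lett (x : ℕ) (e₁ e₂ : Expr)
  | newClock
  | resume (v : Val)
  | next
  | dropE (v : Val)
  | async (vs : List Val) (e : Expr)
  | finish (e : Expr)
  | join (l : ℕ)
deriving DecidableEq

/-- Substitution of a value for a variable in a value. -/
def Val.subst (v : Val) (w : Val) (x : ℕ) : Val :=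
  match v with
  | .vr y => if y = x then w else .vr y
  | v => v

/-- Capture-avoiding substitution of a value for a variable. -/
def Expr.subst (w : Val) (x : ℕ) : Expr → Expr
  | .val v => .val (v.subst w x)
  | .lett y e₁ e₂ => .lett y (e₁.subst w x) (if y = x then e₂ else e₂.subst w x)
  | .newClock => .newClock
  | .resume v => .resume (v.subst w x)
  | .next => .next
  | .dropE v => .dropE (v.subst w x)
  | .async vs e => .async (vs.map (fun v => v.subst w x)) (e.subst w x)
  | .finish e => .finish (e.subst w x)
  | .join l => .join l

/-- An activity: a local view, an expression, and named sub-activities. -/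
inductive Activity where
  | mk (V : View) (e : Expr) (sub : ℕ → Option Activity)

/-- Sets of named activities. -/
abbrev ActSet := ℕ → Option Activity

def emptyA : ActSet := fun _ => none
def emptyV : View := fun _ => none

/-- Membership of a named activity anywhere in an activity tree. -/
inductive MemAct : ℕ → Activity → ActSet → Prop where
  | here : A l = some a → MemAct l a A
  | deeper : A l' = some (.mk V e A') → MemAct l a A' → MemAct l a A

/-- Heap after an `async` spawning `l'` registered on clocks `cs` (spawner `l`). -/
def asyncHeap (H : Heap) (cs : List ℕ) (l l' : ℕ) : Heap := fun c =>
  if c ∈ cs then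
    match H c with
    | some (p, R, Q) => some (p, insert l' R, if l ∈ Q then insert l' Q else Q)
    | none => none
  else H c

/-- Local view of a freshly spawned activity: a copy of the global phases. -/
def asyncView (H : Heap) (cs : List ℕ) : View := fun c =>
  if c ∈ cs then (H c).map (·.1) else none

/-- Heap after a `next`: clocks in C₁ advance their phase and reset Q. -/
def nextHeap (H : Heap) (V : View) : Heap := fun c =>
  match V c, H c with
  | some p, some (q, R, Q) =>
      if q = p ∧ Q = R then some (p + 1, R, ∅) else some (q, R, Q)
  | _, _ => H c

/-- Local view after a `next`: all local phases advance. -/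
def nextView (V : View) : View := fun c => (V c).map (· + 1)

/-- Activity reduction `H ; a →ₗ H' ; A'' ; a'`. -/
inductive ActStep : Heap → ℕ → Activity → Heap → ActSet → Activity → Prop where
  | async :
      (∀ c ∈ cs, (V c).isSome) →
      (∀ c ∈ cs, (H c).isSome) →
      (∀ c p R Q, H c = some (p, R, Q) → l' ∉ R) →
      A l' = none →
      ActStep H l (.mk V (.async (cs.map .clk) e) A)
        (asyncHeap H cs l l')
        (updf emptyA l' (.mk (asyncView H cs) e emptyA))
        (.mk V (.val .unit) A)
  | make :
      H c = none →
      ActStep H l (.mk V .newClock A)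
        (updf H c (0, {l}, ∅)) emptyA
        (.mk (updf V c 0) (.val (.clk c)) A)
  | resume :
      H c = some (p, R, Q) → l ∉ Q → V c = some q →
      ActStep H l (.mk V (.resume (.clk c)) A)
        (updf H c (p, R, if p = q then insert l Q else Q)) emptyA
        (.mk V (.val .unit) A)
  | next :
      (∀ c p, V c = some p →
        (∃ R, H c = some (p, R, R)) ∨ (∃ R Q, H c = some (p + 1, R, Q))) →
      ActStep H l (.mk V .next A)
        (nextHeap H V) emptyA
        (.mk (nextView V) (.val .unit) A)
  | drop :
      V c = some q → H c = some (p, R, Q) →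
      ActStep H l (.mk V (.dropE (.clk c)) A)
        (if R = {l} then (fun c' => if c' = c then none else H c')
         else updf H c (p, R.erase l, Q.erase l))
        emptyA
        (.mk (fun c' => if c' = c then none else V c') (.val .unit) A)
  | finish :
      A l₀ = none →
      ActStep H l (.mk V (.finish e) A)
        H emptyA
        (.mk V (.join l₀) (updf A l₀ (.mk V e emptyA)))
  | join :
      A l₀ = some (.mk emptyV (.val v₀) emptyA) →
      (∀ l' a, A l' = some a → ∃ v, a = .mk emptyV (.val v) emptyA) →
      ActStep H l (.mk V (.join l₀) A)
        H emptyA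
        (.mk emptyV (.val v₀) emptyA)

/-- Machine states: a heap and a set of named activities. -/
abbrev State := Heap × ActSet

/-- State reduction. -/
inductive StateStep : State → State → Prop where
  | letVal :
      A l = some (.mk V (.lett x (.val v) e) A') →
      StateStep (H, A) (H, updf A l (.mk V (e.subst v x) A'))
  | lett :
      A₀ l = some (.mk V (.lett x e e₂) A) →
      ActStep H l (.mk V e A) H' A''' (.mk V' e' A') →
      StateStep (H, A₀)
        (H', fun l'' =>
          if l'' = l then some (.mk V' (.lett x e' e₂) A')
          else match A''' l'' with
               | some a => some a
               | none => A₀ l'')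
  | activity :
      A l = some (.mk V e A') →
      StateStep (H, A') (H', A'') →
      StateStep (H, A) (H', updf A l (.mk V e A''))

/-- The set of run-time errors (`ClockUseException`). -/
inductive ErrState : State → Prop where
  | asyncErr : ∀ {A : ActSet} {l x : ℕ} {V : View} {cs : List ℕ} {e e₂ : Expr}
        {A' : ℕ → Option Activity} {c : ℕ} {H : Heap},
      A l = some (.mk V (.lett x (.async (cs.map Val.clk) e) e₂) A') →
      c ∈ cs → (H c = none ∨ V c = none) →
      ErrState (H, A)
  | resumeErr :
      A l = some (.mk V (.lett x (.resume (.clk c)) e₂) A') →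
      ((∃ p R Q, H c = some (p, R, Q) ∧ l ∈ Q) ∨ H c = none ∨ V c = none) →
      ErrState (H, A)
  | dropErr :
      A l = some (.mk V (.lett x (.dropE (.clk c)) e₂) A') →
      (H c = none ∨ V c = none) →
      ErrState (H, A)
  | nextErr1 :
      A l = some (.mk V (.lett x .next e₂) A') →
      V c = some p → H c = some (p, R, Q) → l ∉ Q →
      ErrState (H, A)
  | nextErr2 :
      A l = some (.mk V (.lett x .next e₂) A') →
      V c = some p → H c = none →
      ErrState (H, A)
  | actErr :
      A l = some (.mk V (.val v) A') → V c = some p →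
      ErrState (H, A)
  | actSetErr :
      A l = some (.mk V e A') → ErrState (H, A') →
      ErrState (H, A)

/-- Types: unit and clocks with singleton type names. -/
inductive Ty where
  | unit
  | clock (α : ℕ)
deriving DecidableEq

/-- Type environments map variables and clock names to types. -/
abbrev Env := ℕ → Option Ty

/-- Value typing `Γ; 𝓡 ⊢ v : τ`. -/
inductive VTy : Env → Finset ℕ → Val → Ty → Prop where
  | unit : VTy Γ R .unit .unit
  | vr : Γ x = some τ → VTy Γ R (.vr x) τ
  | clk : Γ c = some (.clock α) → α ∈ R → VTy Γ R (.clk c) (.clock α)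

/-- Expression typing `Γ; 𝓡; 𝓠 ⊢ e : (τ, 𝓡', 𝓠')`. -/
inductive ETy : Env → Finset ℕ → Finset ℕ → Expr → Ty × Finset ℕ × Finset ℕ → Prop where
  | val : VTy Γ R v τ → ETy Γ R Q (.val v) (τ, R, Q)
  | lett :
      ETy Γ R Q e₁ (τ₁, R₁, Q₁) →
      ETy (updf Γ x τ₁) R₁ Q₁ e₂ T →
      ETy Γ R Q (.lett x e₁ e₂) T
  | make : α ∉ R → α ∉ Q → ETy Γ R Q .newClock (.clock α, insert α R, Q)
  | resume :
      VTy Γ R v (.clock α) → α ∈ R → α ∉ Q →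
      ETy Γ R Q (.resume v) (.unit, R, insert α Q)
  | next : Q = R → ETy Γ R Q .next (.unit, R, ∅)
  | drop :
      VTy Γ R v (.clock α) →
      ETy Γ R Q (.dropE v) (.unit, R.erase α, Q.erase α)
  | async :
      (∀ v ∈ vs, ∃ α ∈ S, VTy Γ R v (.clock α)) →
      (∀ α ∈ S, ∃ v ∈ vs, VTy Γ R v (.clock α)) →
      ETy Γ S (S ∩ Q) e (τ, ∅, ∅) →
      ETy Γ R Q (.async vs e) (.unit, R, Q)
  | finish : ETy Γ ∅ ∅ e (τ, ∅, ∅) → ETy Γ R Q (.finish e) (τ, R, Q)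
  | join : Γ l = some τ → ETy Γ R Q (.join l) (τ, R, Q)

/-- View typing `Γ ⊢ V : 𝓡`: the clocks of `V` correspond to the singleton types in `𝓡`. -/
def VwTy (Γ : Env) (V : View) (R : Finset ℕ) : Prop :=
  (∀ c, (V c).isSome → ∃ α ∈ R, Γ c = some (.clock α)) ∧
  (∀ α ∈ R, ∃ c, (V c).isSome ∧ Γ c = some (.clock α))

/-- Heap typing `Γ ⊢ H`: allocated clocks are exactly the clock names of `Γ`,
each with a distinct singleton type. -/
def HTy (Γ : Env) (H : Heap) : Prop :=
  (∀ c, (H c).isSome ↔ ∃ α, Γ c = some (.clock α)) ∧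
  (∀ c c' α, Γ c = some (.clock α) → Γ c' = some (.clock α) → c = c')

/-- Activity typing `Γ ⊢ a : τ`. -/
inductive ATy : Env → Activity → Ty → Prop where
  | mk : ∀ {Γ : Env} {V : View} {R Q : Finset ℕ} {e : Expr} {τ : Ty}
        {A : ℕ → Option Activity} {tys : ℕ → Ty},
      VwTy Γ V R → Q ⊆ R →
      ETy Γ R Q e (τ, ∅, ∅) →
      (∀ l a, A l = some a → ATy Γ a (tys l)) →
      ATy Γ (.mk V e A) τ

/-- Activity-set typing `Γ ⊢ A`. -/
def ASetTy (Γ : Env) (A : ActSet) : Prop :=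
  ∀ l a, A l = some a → ∃ τ, ATy Γ a τ

/-- Well-formed states: Q ⊆ R, and registered sets match local views. -/
def WF (S : State) : Prop :=
  ∀ c p R Q, S.1 c = some (p, R, Q) →
    Q ⊆ R ∧ ∀ l, l ∈ R ↔ ∃ V e A', MemAct l (.mk V e A') S.2 ∧ (V c).isSome

/-- State typing `Γ ⊢ S`. -/
def STy (Γ : Env) (S : State) : Prop :=
  WF S ∧ HTy Γ S.1 ∧ ASetTy Γ S.2

/-- Environment extension `Γ ⊆ Γ'`. -/
def EnvLe (Γ Γ' : Env) : Prop := ∀ n τ, Γ n = some τ → Γ' n = some τ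

/-- The initial state for an expression. -/
def load (e : Expr) : State :=
  (fun _ => none, updf emptyA 0 (.mk emptyV (.lett 0 e (.val .unit)) emptyA))

/-- clock deallocation soundness: if `l` is the only activity
registered with `c` and executes `drop c`, then no other activity's local view
mentions `c`, and deleting `c` from the heap preserves well-formedness. -/
theorem drop_dealloc_sound {H : Heap} {A₀ : ActSet} {l x : ℕ} {V : View}
    {c : ℕ} {e₂ : Expr} {A' : ActSet} {p : ℕ} {Q : Finset ℕ}
    (hwf : WF (H, A₀))
    (hl : A₀ l = some (.mk V (.lett x (.dropE (.clk c)) e₂) A'))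
    (hc : H c = some (p, {l}, Q)) :
    (∀ l' V' e' A'', MemAct l' (.mk V' e' A'') A₀ → l' ≠ l → V' c = none) ∧
    WF ((fun c' => if c' = c then none else H c'),
        updf A₀ l (.mk (fun c' => if c' = c then none else V c')
          (.lett x (.val .unit) e₂) A')) := by
  have hmem := (hwf c p {l} Q hc).2
  constructor
  · intro l' V' e' A'' hm hne
    cases hV : V' c with
    | none => rfl
    | some q =>
      have : l' ∈ ({l} : Finset ℕ) := (hmem l').2 ⟨V', e', A'', hm, by simp [hV]⟩
      simp at this; exact absurd this hne
  · intro c' p' R' Q' hc'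
    simp only at hc'
    by_cases hcc : c' = c
    · simp [hcc] at hc'
    · simp only [if_neg hcc] at hc'
      obtain ⟨hQR, hR⟩ := hwf c' p' R' Q' hc'
      have hR' : ∀ l', l' ∈ R' ↔
          ∃ V e A'', MemAct l' (.mk V e A'') A₀ ∧ (V c').isSome := hR
      set Vn : View := fun c'' => if c'' = c then none else V c'' with hVn
      set An : ActSet := updf A₀ l (.mk Vn (.lett x (.val .unit) e₂) A') with hAn
      refine ⟨hQR, fun l' => ?_⟩
      have goal_iff : l' ∈ R' ↔ ∃ V e A'', MemAct l' (.mk V e A'') An ∧ (V c').isSome := by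
        constructor
        · intro hl'
          obtain ⟨V₀, e₀, A₀'', hm, hs⟩ := (hR' l').1 hl'
          cases hm with
          | here h =>
            have h' : A₀ l' = some (Activity.mk V₀ e₀ A₀'') := h
            by_cases hll : l' = l
            · subst hll
              rw [hl] at h'
              injection h' with h'
              injection h' with h1 h2 h3
              subst h1; subst h3
              refine ⟨Vn, .lett x (.val .unit) e₂, A', MemAct.here (show An l' = some (.mk Vn (.lett x (.val .unit) e₂) A') by simp [hAn, updf]), ?_⟩
              simpa [hVn, hcc] using hs
            · exact ⟨V₀, e₀, A₀'', MemAct.here (show An l' = some (.mk V₀ e₀ A₀'') by simp [hAn, updf, hll, h']), hs⟩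
          | deeper h hm' =>
            rename_i Ae m Ve ee
            have h' : A₀ m = some (Activity.mk Ve ee Ae) := h
            by_cases hml : m = l
            · subst hml
              rw [hl] at h'
              injection h' with h'
              injection h' with h1 h2 h3
              subst h3
              exact ⟨V₀, e₀, A₀'', MemAct.deeper (show An m = some (.mk Vn (.lett x (.val .unit) e₂) A') by simp [hAn, updf]) hm', hs⟩
            · exact ⟨V₀, e₀, A₀'', MemAct.deeper (show An m = some (.mk Ve ee Ae) by simp [hAn, updf, hml, h']) hm', hs⟩
        · rintro ⟨V₀, e₀, A₀'', hm, hs⟩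
          apply (hR' l').2
          cases hm with
          | here h =>
            have h' : An l' = some (Activity.mk V₀ e₀ A₀'') := h
            by_cases hll : l' = l
            · subst hll
              simp only [hAn, updf, if_pos rfl] at h'
              injection h' with h'
              injection h' with h1 h2 h3
              subst h1; subst h3
              refine ⟨V, _, A', MemAct.here hl, ?_⟩
              simpa [hVn, hcc] using hs
            · simp only [hAn, updf, if_neg hll] at h'
              exact ⟨V₀, e₀, A₀'', MemAct.here h', hs⟩
          | deeper h hm' =>
            rename_i Ae m Ve ee
            have h' : An m = some (Activity.mk Ve ee Ae) := h
            by_cases hml : m = l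
            · subst hml
              simp only [hAn, updf, if_pos rfl] at h'
              injection h' with h'
              injection h' with h1 h2 h3
              subst h3
              exact ⟨V₀, e₀, A₀'', MemAct.deeper hl hm', hs⟩
            · simp only [hAn, updf, if_neg hml] at h'
              exact ⟨V₀, e₀, A₀'', MemAct.deeper h' hm', hs⟩
      exact goal_iff
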